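/- Let W > 0 and M > 0 be real numbers, set t = (√2 − 1)·M, and define L : ℝ → ℝ by L g = g² if g ≥ t and L g = 2·t·g − t² otherwise. Then the convex hull (over ℝ) of the set S = {(u, g) ∈ ℝ² : g·|g| = W·u ∧ −M ≤ g ≤ M} equals the set {(u, g) ∈ ℝ² : −M ≤ g ≤ M ∧ L g ≤ W·u ∧ W·u ≤ −L (−g)}. (The boundary of the convex hull of the bidirectional Weymouth set consists of the two tangent lines from the endpoints (±M²/W, ±M) to the opposite parabolic branch together with the outermost arcs of the Weymouth curve.) -/

import Mathlib

/-!
`L` is the upper envelope of its tangent lines `g ↦ 2cg - c²` at the points `c ≥ t`, hence convex,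
and the tangency condition `t² + 2tM = M²` puts it below `g ↦ g|g|` on `[-M, M]`. So the Weymouth
set lies in the convex region `E = {(u, g) : |g| ≤ M, L g ≤ W u}` and, being invariant under
`p ↦ -p`, in `E ∩ -E`.
Conversely, the lower boundary of `E` consists of points of the curve and of the chord from
`(-M²/W, -M)` to `(t²/W, t)`, so it lies in the hull; by the same symmetry so does the upper boundary of `-E`,
and every point of `E ∩ -E` lies on a horizontal segment joining the two.
-/

open Set

noncomputable def weymouthLower (t g : ℝ) : ℝ := if t ≤ g then g ^ 2 else 2 * t * g - t ^ 2

def weymouthSet (W M : ℝ) : Set (ℝ × ℝ) := {p | p.2 * |p.2| = W * p.1 ∧ -M ≤ p.2 ∧ p.2 ≤ M}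

def weymouthEpigraph (W M t : ℝ) : Set (ℝ × ℝ) :=
  {p | p.2 ∈ Icc (-M) M ∧ weymouthLower t p.2 ≤ W * p.1}

section

variable {W M t : ℝ}

theorem tangent_le_weymouthLower {c : ℝ} (hc : t ≤ c) (g : ℝ) :
    2 * c * g - c ^ 2 ≤ weymouthLower t g := by
  unfold weymouthLower
  split_ifs with hg
  · nlinarith [sq_nonneg (g - c)]
  · nlinarith [mul_nonneg (sub_nonneg.2 hc) (by linarith : 0 ≤ c + t - 2 * g)]

theorem weymouthLower_eq_tangent_max (t g : ℝ) :
    weymouthLower t g = 2 * max t g * g - max t g ^ 2 := by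
  unfold weymouthLower
  split_ifs with hg
  · rw [max_eq_right hg]; ring
  · rw [max_eq_left (not_le.1 hg).le]

theorem convexOn_weymouthLower (t : ℝ) : ConvexOn ℝ univ (weymouthLower t) := by
  refine ⟨convex_univ, fun x _ y _ a b ha hb hab => ?_⟩
  set c := max t (a • x + b • y)
  have hc : t ≤ c := le_max_left _ _
  calc weymouthLower t (a • x + b • y)
      = a * (2 * c * x - c ^ 2) + b * (2 * c * y - c ^ 2) := by
        rw [weymouthLower_eq_tangent_max, smul_eq_mul, smul_eq_mul]
        linear_combination c ^ 2 * hab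
    _ ≤ a • weymouthLower t x + b • weymouthLower t y := by
        simp only [smul_eq_mul]
        gcongr <;> exact tangent_le_weymouthLower hc _

theorem convex_weymouthEpigraph (W M t : ℝ) : Convex ℝ (weymouthEpigraph W M t) :=
  ((convexOn_weymouthLower t).subset (subset_univ _) (convex_Icc (-M) M)).convex_epigraph
    |>.linear_preimage ((LinearMap.snd ℝ ℝ ℝ).prod (W • LinearMap.fst ℝ ℝ ℝ))

theorem weymouthLower_le_mul_abs (ht₀ : 0 ≤ t) (htan : t ^ 2 + 2 * t * M = M ^ 2) {g : ℝ}
    (hg : -M ≤ g) : weymouthLower t g ≤ g * |g| := by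
  unfold weymouthLower
  split_ifs with htg
  · rw [abs_of_nonneg (ht₀.trans htg), sq]
  rcases le_or_gt 0 g with hg₀ | hg₀
  · rw [abs_of_nonneg hg₀]; nlinarith [sq_nonneg (g - t)]
  · rw [abs_of_neg hg₀]
    -- `M (t² - 2tg - g²) = (g + M)(t² - Mg)` by the tangency condition
    nlinarith [mul_nonneg (by linarith : 0 ≤ g + M) (by nlinarith : 0 ≤ t ^ 2 - M * g)]

theorem weymouthSet_subset_weymouthEpigraph (ht₀ : 0 ≤ t) (htan : t ^ 2 + 2 * t * M = M ^ 2) :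
    weymouthSet W M ⊆ weymouthEpigraph W M t :=
  fun _ ⟨hcurve, hlo, hhi⟩ => ⟨⟨hlo, hhi⟩, hcurve ▸ weymouthLower_le_mul_abs ht₀ htan hlo⟩

theorem neg_weymouthSet (W M : ℝ) : -weymouthSet W M = weymouthSet W M := by
  ext p
  simp only [weymouthSet, mem_neg, mem_ofPred_eq, Prod.fst_neg, Prod.snd_neg, abs_neg, neg_mul,
    mul_neg, neg_inj, neg_le_neg_iff, neg_le]
  tauto

theorem mk_mem_segment_of_affine {a b x y g : ℝ} (hx : x ≤ g) (hy : g ≤ y) :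
    (a * g + b, g) ∈ segment ℝ (a * x + b, x) (a * y + b, y) := by
  obtain ⟨μ, ν, hμ, hν, hμν, rfl⟩ : g ∈ segment ℝ x y := by
    rw [segment_eq_Icc (hx.trans hy)]; exact ⟨hx, hy⟩
  refine ⟨μ, ν, hμ, hν, hμν, Prod.ext ?_ rfl⟩
  simp only [Prod.fst_add, Prod.smul_fst, smul_eq_mul]
  linear_combination b * hμν

theorem mk_weymouthLower_div_mem_convexHull (hW : W ≠ 0) (ht₀ : 0 ≤ t) (htM : t ≤ M)
    (htan : t ^ 2 + 2 * t * M = M ^ 2) {g : ℝ} (hg : g ∈ Icc (-M) M) :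
    (weymouthLower t g / W, g) ∈ convexHull ℝ (weymouthSet W M) := by
  by_cases htg : t ≤ g
  · refine subset_convexHull ℝ _ ⟨?_, hg⟩
    simp only [weymouthLower, if_pos htg, abs_of_nonneg (ht₀.trans htg)]
    field_simp
  have hline : weymouthLower t g / W = 2 * t / W * g + -t ^ 2 / W := by
    rw [weymouthLower, if_neg htg]; field_simp; ring
  have hP : (2 * t / W * -M + -t ^ 2 / W, -M) ∈ weymouthSet W M := by
    refine ⟨?_, le_rfl, by linarith⟩
    simp only [abs_neg, abs_of_nonneg (ht₀.trans htM)]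
    field_simp
    linear_combination htan
  have hQ : (2 * t / W * t + -t ^ 2 / W, t) ∈ weymouthSet W M := by
    refine ⟨?_, by linarith, htM⟩
    simp only [abs_of_nonneg ht₀]
    field_simp
    ring
  rw [hline]
  exact segment_subset_convexHull hP hQ (mk_mem_segment_of_affine hg.1 (not_le.1 htg).le)

theorem convexHull_weymouthSet (hW : W ≠ 0) (ht₀ : 0 ≤ t) (htM : t ≤ M)
    (htan : t ^ 2 + 2 * t * M = M ^ 2) :
    convexHull ℝ (weymouthSet W M) = weymouthEpigraph W M t ∩ -weymouthEpigraph W M t := by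
  have hsub := weymouthSet_subset_weymouthEpigraph (W := W) ht₀ htan
  refine subset_antisymm (convexHull_min (subset_inter hsub ?_) ?_) ?_
  · rw [← neg_weymouthSet]; exact neg_subset_neg.2 hsub
  · exact (convex_weymouthEpigraph W M t).inter (convex_weymouthEpigraph W M t).neg
  rintro p ⟨⟨hg, hlo⟩, hg', hhi⟩
  have hlower := mk_weymouthLower_div_mem_convexHull hW ht₀ htM htan hg
  have hupper : (-(weymouthLower t (-p.2) / W), p.2) ∈ convexHull ℝ (weymouthSet W M) := by
    rw [← neg_weymouthSet, convexHull_neg]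
    simpa using mk_weymouthLower_div_mem_convexHull hW ht₀ htM htan hg'
  have hp₁ : p.1 ∈ segment ℝ (weymouthLower t p.2 / W) (-(weymouthLower t (-p.2) / W)) := by
    rw [segment_eq_uIcc, neg_div', ← image_div_const_uIcc]
    refine ⟨W * p.1, Icc_subset_uIcc ⟨hlo, ?_⟩, mul_div_cancel_left₀ _ hW⟩
    simp only [Prod.fst_neg, Prod.snd_neg, mul_neg] at hhi
    linarith
  refine (convex_convexHull ℝ _).segment_subset hlower hupper ?_
  rw [← Prod.image_mk_segment_left]
  exact ⟨p.1, hp₁, rfl⟩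

end

/-- The convex hull of the bidirectional Weymouth set is bounded by two tangent
lines together with the outermost arcs of the Weymouth curve. -/
theorem convex_hull_bidirectional_weymouth (W M t : ℝ) (hW : 0 < W) (hM : 0 < M)
    (ht : t = (Real.sqrt 2 - 1) * M) (L : ℝ → ℝ)
    (hL : ∀ g : ℝ, L g = if t ≤ g then g ^ 2 else 2 * t * g - t ^ 2) :
    convexHull ℝ {p : ℝ × ℝ | p.2 * |p.2| = W * p.1 ∧ -M ≤ p.2 ∧ p.2 ≤ M} =
      {p : ℝ × ℝ | -M ≤ p.2 ∧ p.2 ≤ M ∧ L p.2 ≤ W * p.1 ∧ W * p.1 ≤ -L (-p.2)} := by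
  obtain rfl : L = weymouthLower t := funext hL
  have hsqrt : Real.sqrt 2 ^ 2 = 2 := Real.sq_sqrt zero_le_two
  have hsqrt_gt : 1 < Real.sqrt 2 := by nlinarith [Real.sqrt_nonneg 2]
  have hsqrt_lt : Real.sqrt 2 < 2 := by nlinarith [Real.sqrt_nonneg 2]
  have ht₀ : 0 ≤ t := by rw [ht]; nlinarith
  have htM : t ≤ M := by rw [ht]; nlinarith
  have htan : t ^ 2 + 2 * t * M = M ^ 2 := by rw [ht]; linear_combination M ^ 2 * hsqrt
  change convexHull ℝ (weymouthSet W M) = _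
  rw [convexHull_weymouthSet hW.ne' ht₀ htM htan]
  ext p
  simp only [weymouthEpigraph, mem_inter_iff, mem_neg, mem_ofPred_eq, mem_Icc, Prod.fst_neg,
    Prod.snd_neg, mul_neg]
  constructor
  · rintro ⟨⟨⟨h₁, h₂⟩, h₃⟩, -, h₄⟩
    exact ⟨h₁, h₂, h₃, by linarith⟩
  · rintro ⟨h₁, h₂, h₃, h₄⟩
    exact ⟨⟨⟨h₁, h₂⟩, h₃⟩, ⟨by linarith, by linarith⟩, by linarith⟩
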